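/- Let R be a Noetherian ring, A the largest right ideal with |A|_r < |R|_r. Then |R|_r = |R/A|_r and, assuming right Krull-homogeneous Noetherian rings satisfy Krull symmetry (|S|_r = |S|_l for such S), one obtains |R|_r ≤ |R|_l. -/
import Mathlib


universe u

/-- `DevLE α o`: the Gabriel–Rentschler deviation of the preorder `α` is at most `o`. -/
def DevLE (α : Type u) [Preorder α] (o : Ordinal.{u}) : Prop :=
  ∀ f : ℕ → α, (∀ n, f (n + 1) ≤ f n) →
    ∃ N : ℕ, ∀ n, N ≤ n →
      f n ≤ f (n + 1) ∨
        ∃ o' : {x : Ordinal.{u} // x < o},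
          DevLE {y : α // f (n + 1) ≤ y ∧ y ≤ f n} o'.1
termination_by o
decreasing_by exact o'.2

/-- The deviation (Krull dimension) of a preorder, as the least ordinal bound. -/
noncomputable def dev (α : Type u) [Preorder α] : Ordinal.{u} := sInf {o | DevLE α o}

/-- The left Krull dimension of a ring: deviation of the lattice of left ideals. -/
noncomputable def lKdim (R : Type u) [Ring R] : Ordinal.{u} := dev (Submodule R R)

/-- The right Krull dimension of a ring: deviation of the lattice of right ideals. -/
noncomputable def rKdim (R : Type u) [Ring R] : Ordinal.{u} := dev (Submodule Rᵐᵒᵖ R)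

/-- Krull dimension of a right ideal `J` as a right module: deviation of `[⊥, J]`. -/
noncomputable def rIdealDim (R : Type u) [Ring R] (J : Submodule Rᵐᵒᵖ R) : Ordinal.{u} :=
  dev {I : Submodule Rᵐᵒᵖ R // I ≤ J}

/-- Krull dimension of a left ideal `J` as a left module. -/
noncomputable def lIdealDim (R : Type u) [Ring R] (J : Submodule R R) : Ordinal.{u} :=
  dev {I : Submodule R R // I ≤ J}

/-- A ring is right Krull homogeneous if every nonzero right ideal has full dimension. -/
def RightKH (R : Type u) [Ring R] : Prop :=
  ∀ J : Submodule Rᵐᵒᵖ R, J ≠ ⊥ → rIdealDim R J = rKdim R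

def LeftKH (R : Type u) [Ring R] : Prop :=
  ∀ J : Submodule R R, J ≠ ⊥ → lIdealDim R J = lKdim R

/-- A two-sided ideal is prime if it is proper and `aRb ⊆ P` implies `a ∈ P` or `b ∈ P`. -/
def IsPrimeT {R : Type u} [Ring R] (P : TwoSidedIdeal R) : Prop :=
  (P : Set R) ≠ Set.univ ∧ ∀ a b : R, (∀ r : R, a * r * b ∈ P) → a ∈ P ∨ b ∈ P

/-- Right Krull dimension of the quotient ring `R/I`. -/
noncomputable def rKdimQ {R : Type u} [Ring R] (I : TwoSidedIdeal R) : Ordinal.{u} :=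
  rKdim I.ringCon.Quotient

noncomputable def lKdimQ {R : Type u} [Ring R] (I : TwoSidedIdeal R) : Ordinal.{u} :=
  lKdim I.ringCon.Quotient

/-- `Λ(R)`: primes with full right Krull dimension. -/
def Lam (R : Type u) [Ring R] : Set (TwoSidedIdeal R) :=
  {P | IsPrimeT P ∧ rKdimQ P = rKdim R}

/-- `Λ'(R)`: primes with full left Krull dimension. -/
def Lam' (R : Type u) [Ring R] : Set (TwoSidedIdeal R) :=
  {P | IsPrimeT P ∧ lKdimQ P = lKdim R}

/-- A two-sided ideal viewed as a right ideal. -/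
def rightIdealOf {R : Type u} [Ring R] (I : TwoSidedIdeal R) : Submodule Rᵐᵒᵖ R where
  carrier := I
  zero_mem' := I.zero_mem
  add_mem' := I.add_mem
  smul_mem' := fun r x hx => I.mul_mem_right x r.unop hx

/-- A two-sided ideal viewed as a left ideal. -/
def leftIdealOf {R : Type u} [Ring R] (I : TwoSidedIdeal R) : Submodule R R where
  carrier := I
  zero_mem' := I.zero_mem
  add_mem' := I.add_mem
  smul_mem' := fun r x hx => I.mul_mem_left r x hx

/-- The right annihilator of a set, as a right ideal. -/
def rAnnIdeal (R : Type u) [Ring R] (S : Set R) : Submodule Rᵐᵒᵖ R where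
  carrier := {x | ∀ y ∈ S, y * x = 0}
  zero_mem' := by intro y _; simp
  add_mem' := by intro a b ha hb y hy; rw [mul_add, ha y hy, hb y hy, add_zero]
  smul_mem' := by
    intro r x hx y hy
    show y * (x * r.unop) = 0
    rw [← mul_assoc, hx y hy, zero_mul]

/-- The left annihilator of a set. -/
def lAnnSet (R : Type u) [Ring R] (S : Set R) : Set R := {x | ∀ y ∈ S, x * y = 0}


/-! ### Auxiliary development: basic theory of the deviation -/

lemma devLE_iff' (α : Type u) [Preorder α] (o : Ordinal.{u}) : DevLE α o ↔
  ∀ f : ℕ → α, (∀ n, f (n + 1) ≤ f n) →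
    ∃ N : ℕ, ∀ n, N ≤ n →
      f n ≤ f (n + 1) ∨
        ∃ o' : {x : Ordinal.{u} // x < o},
          DevLE {y : α // f (n + 1) ≤ y ∧ y ≤ f n} o'.1 := by
  rw [DevLE]

lemma devLE_mono_ord {α : Type u} [Preorder α] {o₁ o₂ : Ordinal.{u}}
    (h : DevLE α o₁) (hle : o₁ ≤ o₂) : DevLE α o₂ := by
  rw [devLE_iff'] at h ⊢
  intro f hf
  obtain ⟨N, hN⟩ := h f hf
  refine ⟨N, fun n hn => ?_⟩
  rcases hN n hn with h' | ⟨o', h'⟩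
  · exact Or.inl h'
  · exact Or.inr ⟨⟨o'.1, lt_of_lt_of_le o'.2 hle⟩, h'⟩

lemma devLE_of_embedding : ∀ (o : Ordinal.{u}), ∀ {α β : Type u} [PartialOrder α] [PartialOrder β]
    (_ : α ↪o β), DevLE β o → DevLE α o := by
  intro o
  induction o using Ordinal.induction with
  | h o IH =>
    intro α β _ _ g hβ
    rw [devLE_iff']
    rw [devLE_iff'] at hβ
    intro f hf
    obtain ⟨N, hN⟩ := hβ (fun n => g (f n)) (fun n => g.monotone (hf n))
    refine ⟨N, fun n hn => ?_⟩
    rcases hN n hn with h | ⟨o', h⟩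
    · exact Or.inl (g.le_iff_le.mp h)
    · refine Or.inr ⟨o', IH o'.1 o'.2 (OrderEmbedding.ofMapLEIff
        (fun y : {y : α // f (n+1) ≤ y ∧ y ≤ f n} => (⟨g y.1, g.monotone y.2.1, g.monotone y.2.2⟩ :
          {y : β // g (f (n+1)) ≤ y ∧ y ≤ g (f n)}))
        (fun a b => Subtype.mk_le_mk.trans (g.le_iff_le.trans Subtype.coe_le_coe))) h⟩

lemma dev_le {α : Type u} [Preorder α] {o : Ordinal.{u}} (h : DevLE α o) : dev α ≤ o :=
  csInf_le' h

lemma devLE_dev {α : Type u} [Preorder α] (h : ∃ o, DevLE α o) : DevLE α (dev α) :=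
  csInf_mem h

lemma exists_devLE_ge {α : Type u} [PartialOrder α]
    (wf : WellFounded ((· > ·) : α → α → Prop)) (N : α) :
    ∃ o : Ordinal.{u}, DevLE {y : α // N ≤ y} o := by
  induction N using WellFounded.induction wf with
  | _ N IH =>
  refine ⟨(⨆ X : {X : α // N < X}, dev {y : α // X.1 ≤ y}) + 1, ?_⟩
  set κ := ⨆ X : {X : α // N < X}, dev {y : α // X.1 ≤ y} with hκ
  rw [devLE_iff']
  intro f hf
  by_cases hc : ∃ n, (f (n+1)).1 ≤ N
  · obtain ⟨n₀, hn₀⟩ := hc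
    refine ⟨n₀ + 1, fun n hn => Or.inl ?_⟩
    have hanti : Antitone f := antitone_nat_of_succ_le hf
    have : (f n).1 ≤ N := le_trans (hanti hn) hn₀
    exact Subtype.coe_le_coe.mp (le_trans this (f (n+1)).2)
  · push_neg at hc
    refine ⟨0, fun n _ => Or.inr ?_⟩
    have hκlt : κ < κ + 1 := by
      rw [Ordinal.add_one_eq_succ]; exact Order.lt_succ κ
    refine ⟨⟨κ, hκlt⟩, ?_⟩
    have hX : N < (f (n+1)).1 := lt_iff_le_not_ge.mpr ⟨(f (n+1)).2, hc n⟩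
    have hP := IH (f (n+1)).1 hX
    have h1 : DevLE {y : α // (f (n+1)).1 ≤ y} (dev {y : α // (f (n+1)).1 ≤ y}) :=
      devLE_dev hP
    have h2 : dev {y : α // (f (n+1)).1 ≤ y} ≤ κ :=
      le_ciSup (Ordinal.bddAbove_range _) (⟨(f (n+1)).1, hX⟩ : {X : α // N < X})
    refine devLE_of_embedding _ (OrderEmbedding.ofMapLEIff
      (fun y : {y : {y : α // N ≤ y} // f (n+1) ≤ y ∧ y ≤ f n} =>
        (⟨y.1.1, y.2.1⟩ : {y : α // (f (n+1)).1 ≤ y}))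
      (fun a b => Iff.rfl)) (devLE_mono_ord h1 h2)

lemma exists_devLE {α : Type u} [PartialOrder α] [OrderBot α]
    (wf : WellFounded ((· > ·) : α → α → Prop)) : ∃ o, DevLE α o := by
  obtain ⟨o, h⟩ := exists_devLE_ge wf ⊥
  exact ⟨o, devLE_of_embedding o (OrderEmbedding.ofMapLEIff
    (fun x : α => (⟨x, bot_le⟩ : {y : α // ⊥ ≤ y})) (fun a b => Subtype.mk_le_mk)) h⟩

lemma devLE_extension : ∀ (o : Ordinal.{u}), ∀ {α : Type u} [Lattice α] [IsModularLattice α]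
    (u v a : α), u ≤ a → a ≤ v →
    DevLE {x : α // u ≤ x ∧ x ≤ a} o → DevLE {x : α // a ≤ x ∧ x ≤ v} o →
    DevLE {x : α // u ≤ x ∧ x ≤ v} o := by
  intro o
  induction o using Ordinal.induction with
  | h o IH =>
  intro α _ _ u v a hua hav hlo hhi
  rw [devLE_iff']
  intro f hf
  rw [devLE_iff'] at hlo hhi
  obtain ⟨N₁, hN₁⟩ := hlo (fun n => ⟨(f n).1 ⊓ a, le_inf (f n).2.1 hua, inf_le_right⟩)
    (fun n => Subtype.mk_le_mk.mpr (inf_le_inf_right a (hf n)))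
  obtain ⟨N₂, hN₂⟩ := hhi (fun n => ⟨(f n).1 ⊔ a, le_sup_right, sup_le (f n).2.2 hav⟩)
    (fun n => Subtype.mk_le_mk.mpr (sup_le_sup_right (hf n) a))
  refine ⟨max N₁ N₂, fun n hn => ?_⟩
  have h₁ := hN₁ n (le_trans (le_max_left _ _) hn)
  have h₂ := hN₂ n (le_trans (le_max_right _ _) hn)
  rcases h₁ with hs₁ | ⟨o₁, ho₁⟩ <;> rcases h₂ with hs₂ | ⟨o₂, ho₂⟩
  · -- both stall
    have e1 : (f n).1 ⊓ a ≤ (f (n+1)).1 ⊓ a := hs₁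
    have e2 : (f n).1 ⊔ a ≤ (f (n+1)).1 ⊔ a := hs₂
    exact Or.inl (Subtype.coe_le_coe.mp
      (le_of_eq (eq_of_le_of_inf_le_of_sup_le (hf n) e1 e2).symm))
  · -- inf stalls, sup drops with small dev o₂
    have e1 : (f n).1 ⊓ a ≤ (f (n+1)).1 ⊓ a := hs₁
    refine Or.inr ⟨o₂, devLE_of_embedding _ (OrderEmbedding.ofMapLEIff
      (fun y : {y : {x : α // u ≤ x ∧ x ≤ v} // f (n+1) ≤ y ∧ y ≤ f n} =>
        (⟨⟨y.1.1 ⊔ a, le_sup_right, sup_le y.1.2.2 hav⟩,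
          Subtype.mk_le_mk.mpr (sup_le_sup_right y.2.1 a),
          Subtype.mk_le_mk.mpr (sup_le_sup_right y.2.2 a)⟩)) (fun b c => ?_)) ho₂⟩
    constructor
    · intro h
      have h' : b.1.1 ⊔ a ≤ c.1.1 ⊔ a := h
      have key : a ⊓ (f n).1 ≤ c.1.1 := by
        rw [inf_comm]
        exact le_trans (le_trans e1 inf_le_left) c.2.1
      have hb : b.1.1 ≤ (c.1.1 ⊔ a) ⊓ (f n).1 := le_inf (le_trans le_sup_left h') b.2.2
      rw [sup_inf_assoc_of_le a (c.2.2 : c.1.1 ≤ (f n).1)] at hb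
      exact Subtype.mk_le_mk.mpr (Subtype.mk_le_mk.mpr (hb.trans (sup_le le_rfl key)))
    · intro h
      exact Subtype.mk_le_mk.mpr (Subtype.mk_le_mk.mpr
        (sup_le_sup_right (Subtype.coe_le_coe.mpr (Subtype.coe_le_coe.mpr h)) a))
  · -- sup stalls, inf drops with small dev o₁
    have e2 : (f n).1 ⊔ a ≤ (f (n+1)).1 ⊔ a := hs₂
    refine Or.inr ⟨o₁, devLE_of_embedding _ (OrderEmbedding.ofMapLEIff
      (fun y : {y : {x : α // u ≤ x ∧ x ≤ v} // f (n+1) ≤ y ∧ y ≤ f n} =>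
        (⟨⟨y.1.1 ⊓ a, le_inf y.1.2.1 hua, inf_le_right⟩,
          Subtype.mk_le_mk.mpr (inf_le_inf_right a y.2.1),
          Subtype.mk_le_mk.mpr (inf_le_inf_right a y.2.2)⟩)) (fun b c => ?_)) ho₁⟩
    constructor
    · intro h
      have h' : b.1.1 ⊓ a ≤ c.1.1 ⊓ a := h
      have hb : b.1.1 ≤ a ⊔ (f (n+1)).1 := by
        rw [sup_comm]
        exact le_trans b.2.2 (le_trans le_sup_left e2)
      have hb2 : b.1.1 = b.1.1 ⊓ a ⊔ (f (n+1)).1 := by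
        rw [inf_sup_assoc_of_le a (b.2.1 : (f (n+1)).1 ≤ b.1.1)]
        exact (inf_eq_left.mpr hb).symm
      have : b.1.1 ≤ c.1.1 := by
        rw [hb2]
        exact sup_le (le_trans h' inf_le_left) c.2.1
      exact Subtype.mk_le_mk.mpr (Subtype.mk_le_mk.mpr this)
    · intro h
      exact Subtype.mk_le_mk.mpr (Subtype.mk_le_mk.mpr
        (inf_le_inf_right a (Subtype.coe_le_coe.mpr (Subtype.coe_le_coe.mpr h))))
  · -- both drop
    refine Or.inr ⟨⟨max o₁.1 o₂.1, max_lt o₁.2 o₂.2⟩, ?_⟩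
    have hfc : (f (n+1)).1 ≤ (f n).1 := hf n
    have key1 : ((f (n+1)).1 ⊔ (a ⊓ (f n).1)) ⊓ a = a ⊓ (f n).1 := by
      rw [sup_comm, sup_inf_assoc_of_le _ inf_le_left]
      exact sup_eq_left.mpr (by rw [inf_comm]; exact inf_le_inf_left a hfc)
    have hlo' : DevLE {x : α // (f (n+1)).1 ≤ x ∧ x ≤ (f (n+1)).1 ⊔ (a ⊓ (f n).1)} o₁.1 := by
      refine devLE_of_embedding _ (OrderEmbedding.ofMapLEIff
        (fun x : {x : α // (f (n+1)).1 ≤ x ∧ x ≤ (f (n+1)).1 ⊔ (a ⊓ (f n).1)} =>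
          (⟨⟨x.1 ⊓ a, le_inf (le_trans (f (n+1)).2.1 x.2.1) hua, inf_le_right⟩,
            Subtype.mk_le_mk.mpr (inf_le_inf_right a x.2.1),
            Subtype.mk_le_mk.mpr (le_trans (inf_le_inf_right a x.2.2)
              (le_of_eq (key1.trans (inf_comm a (f n).1))))⟩)) (fun b c => ?_)) ho₁
      constructor
      · intro h
        have h' : b.1 ⊓ a ≤ c.1 ⊓ a := h
        have he : b.1 ⊓ (a ⊓ (f n).1) ⊔ (f (n+1)).1 = b.1 ⊓ ((a ⊓ (f n).1) ⊔ (f (n+1)).1) :=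
          inf_sup_assoc_of_le _ b.2.1
        have hb : b.1 ≤ b.1 ⊓ (a ⊓ (f n).1) ⊔ (f (n+1)).1 :=
          le_trans (le_inf le_rfl (le_trans b.2.2 (le_of_eq (sup_comm _ _)))) (le_of_eq he.symm)
        show b.1 ≤ c.1
        exact hb.trans (sup_le (le_trans (le_trans (inf_le_inf_left b.1 inf_le_left) h')
          inf_le_left) c.2.1)
      · intro h
        show b.1 ⊓ a ≤ c.1 ⊓ a
        exact inf_le_inf_right a h
    have hhi' : DevLE {x : α // (f (n+1)).1 ⊔ (a ⊓ (f n).1) ≤ x ∧ x ≤ (f n).1} o₂.1 := by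
      refine devLE_of_embedding _ (OrderEmbedding.ofMapLEIff
        (fun x : {x : α // (f (n+1)).1 ⊔ (a ⊓ (f n).1) ≤ x ∧ x ≤ (f n).1} =>
          (⟨⟨x.1 ⊔ a, le_sup_right, sup_le (le_trans x.2.2 (f n).2.2) hav⟩,
            Subtype.mk_le_mk.mpr (sup_le_sup_right (le_trans le_sup_left x.2.1) a),
            Subtype.mk_le_mk.mpr (sup_le_sup_right x.2.2 a)⟩)) (fun b c => ?_)) ho₂
      constructor
      · intro h
        have h' : b.1 ⊔ a ≤ c.1 ⊔ a := h
        have hb : b.1 ≤ (c.1 ⊔ a) ⊓ (f n).1 := le_inf (le_trans le_sup_left h') b.2.2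
        have he : (c.1 ⊔ a) ⊓ (f n).1 = c.1 ⊔ (a ⊓ (f n).1) := sup_inf_assoc_of_le a c.2.2
        show b.1 ≤ c.1
        exact (hb.trans (le_of_eq he)).trans (sup_le le_rfl (le_trans le_sup_right c.2.1))
      · intro h
        show b.1 ⊔ a ≤ c.1 ⊔ a
        exact sup_le_sup_right h a
    have main := IH (max o₁.1 o₂.1) (max_lt o₁.2 o₂.2) (f (n+1)).1 (f n).1
      ((f (n+1)).1 ⊔ (a ⊓ (f n).1)) le_sup_left (sup_le hfc inf_le_right)
      (devLE_mono_ord hlo' (le_max_left _ _)) (devLE_mono_ord hhi' (le_max_right _ _))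
    exact devLE_of_embedding _ (OrderEmbedding.ofMapLEIff
      (fun y : {y : {x : α // u ≤ x ∧ x ≤ v} // f (n+1) ≤ y ∧ y ≤ f n} =>
        (⟨y.1.1, y.2.1, y.2.2⟩ : {x : α // (f (n+1)).1 ≤ x ∧ x ≤ (f n).1}))
      (fun b c => Iff.rfl)) main

/-! ### Generic order embeddings -/

def embIic {α : Type u} [PartialOrder α] (J : α) : {x : α // x ≤ J} ↪o α :=
  OrderEmbedding.ofMapLEIff (fun x => x.1) (fun a b => Subtype.coe_le_coe)

def embIicToPair {α : Type u} [PartialOrder α] [OrderBot α] (J : α) :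
    {x : α // x ≤ J} ↪o {x : α // ⊥ ≤ x ∧ x ≤ J} :=
  OrderEmbedding.ofMapLEIff (fun x => ⟨x.1, bot_le, x.2⟩) (fun a b => Subtype.mk_le_mk)

def embFullToPair {α : Type u} [PartialOrder α] [BoundedOrder α] :
    α ↪o {x : α // ⊥ ≤ x ∧ x ≤ (⊤ : α)} :=
  OrderEmbedding.ofMapLEIff (fun x => ⟨x, bot_le, le_top⟩) (fun a b => Subtype.mk_le_mk)

/-! ### The quotient ring machinery -/

variable {R₀ : Type u} [Ring R₀] (A₀ : TwoSidedIdeal R₀)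

def qmapS : R₀ →+* A₀.ringCon.Quotient := A₀.ringCon.mk'

lemma qmapS_surj : Function.Surjective (qmapS A₀) :=
  fun s => Quot.inductionOn s (fun r => ⟨r, rfl⟩)

lemma qmapS_eq_iff (x y : R₀) : qmapS A₀ x = qmapS A₀ y ↔ x - y ∈ A₀ := by
  rw [show qmapS A₀ x = (x : A₀.ringCon.Quotient) from rfl,
      show qmapS A₀ y = (y : A₀.ringCon.Quotient) from rfl]
  exact Iff.trans A₀.ringCon.eq (A₀.rel_iff x y)

lemma qmapS_zero_iff (x : R₀) : qmapS A₀ x = 0 ↔ x ∈ A₀ := by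
  rw [show (0 : A₀.ringCon.Quotient) = qmapS A₀ 0 from (map_zero _).symm, qmapS_eq_iff]
  simp

def rcomapS (J : Submodule A₀.ringCon.Quotientᵐᵒᵖ A₀.ringCon.Quotient) : Submodule R₀ᵐᵒᵖ R₀ where
  carrier := {r : R₀ | qmapS A₀ r ∈ J}
  zero_mem' := by show qmapS A₀ 0 ∈ J; rw [map_zero]; exact J.zero_mem
  add_mem' := by
    intro a b ha hb
    show qmapS A₀ (a + b) ∈ J
    rw [map_add]; exact J.add_mem ha hb
  smul_mem' := by
    intro r x hx
    show qmapS A₀ (x * r.unop) ∈ J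
    rw [map_mul]
    have := J.smul_mem (MulOpposite.op (qmapS A₀ r.unop)) hx
    rwa [MulOpposite.smul_eq_mul_unop, MulOpposite.unop_op] at this

lemma mem_rcomapS {J : Submodule A₀.ringCon.Quotientᵐᵒᵖ A₀.ringCon.Quotient} {x : R₀} :
    x ∈ rcomapS A₀ J ↔ qmapS A₀ x ∈ J := Iff.rfl

def rcomapSE : Submodule A₀.ringCon.Quotientᵐᵒᵖ A₀.ringCon.Quotient ↪o Submodule R₀ᵐᵒᵖ R₀ :=
  OrderEmbedding.ofMapLEIff (rcomapS A₀) (fun J₁ J₂ => by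
    constructor
    · intro h s hs
      obtain ⟨r, rfl⟩ := qmapS_surj A₀ s
      exact h hs
    · intro h x hx
      exact h hx)

def lcomapS (J : Submodule A₀.ringCon.Quotient A₀.ringCon.Quotient) : Submodule R₀ R₀ where
  carrier := {r : R₀ | qmapS A₀ r ∈ J}
  zero_mem' := by show qmapS A₀ 0 ∈ J; rw [map_zero]; exact J.zero_mem
  add_mem' := by
    intro a b ha hb
    show qmapS A₀ (a + b) ∈ J
    rw [map_add]; exact J.add_mem ha hb
  smul_mem' := by
    intro c x hx
    show qmapS A₀ (c * x) ∈ J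
    rw [map_mul]
    have := J.smul_mem (qmapS A₀ c) hx
    rwa [smul_eq_mul] at this

def lcomapSE : Submodule A₀.ringCon.Quotient A₀.ringCon.Quotient ↪o Submodule R₀ R₀ :=
  OrderEmbedding.ofMapLEIff (lcomapS A₀) (fun J₁ J₂ => by
    constructor
    · intro h s hs
      obtain ⟨r, rfl⟩ := qmapS_surj A₀ s
      exact h hs
    · intro h x hx
      exact h hx)

def rmapS (I : Submodule R₀ᵐᵒᵖ R₀) :
    Submodule A₀.ringCon.Quotientᵐᵒᵖ A₀.ringCon.Quotient where
  carrier := qmapS A₀ '' I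
  zero_mem' := ⟨0, I.zero_mem, map_zero _⟩
  add_mem' := by
    rintro a b ⟨x, hx, rfl⟩ ⟨y, hy, rfl⟩
    exact ⟨x + y, I.add_mem hx hy, map_add _ x y⟩
  smul_mem' := by
    rintro c s ⟨x, hx, rfl⟩
    obtain ⟨r, hr⟩ := qmapS_surj A₀ c.unop
    refine ⟨x * r, ?_, ?_⟩
    · have := I.smul_mem (MulOpposite.op r) hx
      rwa [MulOpposite.smul_eq_mul_unop, MulOpposite.unop_op] at this
    · rw [map_mul, hr, MulOpposite.smul_eq_mul_unop]

lemma rmapS_le_iff {I I' : Submodule R₀ᵐᵒᵖ R₀} (hA : rightIdealOf A₀ ≤ I') :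
    rmapS A₀ I ≤ rmapS A₀ I' ↔ I ≤ I' := by
  constructor
  · intro h x hx
    obtain ⟨y, hy, hxy⟩ := h ⟨x, hx, rfl⟩
    have hmem : x - y ∈ A₀ := (qmapS_eq_iff A₀ x y).mp hxy.symm
    have hxy' : x - y ∈ I' := hA (show x - y ∈ rightIdealOf A₀ from hmem)
    have := I'.add_mem hxy' hy
    rwa [sub_add_cancel] at this
  · intro h s
    rintro ⟨x, hx, rfl⟩
    exact ⟨x, h hx, rfl⟩

def opREquiv (R : Type u) [Ring R] : Rᵐᵒᵖ ≃ₗ[Rᵐᵒᵖ] R where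
  toFun := MulOpposite.unop
  invFun := MulOpposite.op
  map_add' := fun _ _ => rfl
  map_smul' := fun _ _ => rfl
  left_inv := fun _ => rfl
  right_inv := fun _ => rfl


/-- If `A` is the largest right ideal with `|A|_r < |R|_r` then
`|R|_r = |R/A|_r`, and assuming Krull symmetry for right Krull-homogeneous Noetherian
rings, `|R|_r ≤ |R|_l`. -/
theorem stmt15 (R : Type u) [Ring R] [IsNoetherianRing R] [IsNoetherianRing Rᵐᵒᵖ]
    (A : TwoSidedIdeal R)
    (h1 : rIdealDim R (rightIdealOf A) < rKdim R)
    (h2 : ∀ I : Submodule Rᵐᵒᵖ R, rIdealDim R I < rKdim R → I ≤ rightIdealOf A)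
    (hsym : ∀ (S : Type u) [Ring S] [IsNoetherianRing S] [IsNoetherianRing Sᵐᵒᵖ],
      RightKH S → rKdim S = lKdim S) :
    rKdim R = rKdimQ A ∧ rKdim R ≤ lKdim R := by
  classical
  -- Noetherian / well-foundedness facts
  haveI hNR : IsNoetherian R R := isNoetherianRing_iff.mp inferInstance
  haveI hNRop : IsNoetherian Rᵐᵒᵖ R := isNoetherian_of_linearEquiv (opREquiv R)
  have wfr : WellFounded ((· > ·) : Submodule Rᵐᵒᵖ R → Submodule Rᵐᵒᵖ R → Prop) :=
    wellFounded_gt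
  have wfl : WellFounded ((· > ·) : Submodule R R → Submodule R R → Prop) :=
    wellFounded_gt
  have hKr : DevLE (Submodule Rᵐᵒᵖ R) (rKdim R) := devLE_dev (exists_devLE wfr)
  have hKl : DevLE (Submodule R R) (lKdim R) := devLE_dev (exists_devLE wfl)
  -- transfer along the quotient map
  have hKS : DevLE (Submodule A.ringCon.Quotientᵐᵒᵖ A.ringCon.Quotient) (rKdim R) :=
    devLE_of_embedding _ (rcomapSE A) hKr
  have hdle : rKdimQ A ≤ rKdim R := dev_le hKS
  have hKSd : DevLE (Submodule A.ringCon.Quotientᵐᵒᵖ A.ringCon.Quotient) (rKdimQ A) :=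
    devLE_dev ⟨_, hKS⟩
  -- the `[⊥, A]` interval
  have hloA : DevLE {x : Submodule Rᵐᵒᵖ R // x ≤ rightIdealOf A}
      (rIdealDim R (rightIdealOf A)) :=
    devLE_dev ⟨_, devLE_of_embedding _ (embIic (rightIdealOf A)) hKr⟩
  have hloA' : DevLE {x : Submodule Rᵐᵒᵖ R // ⊥ ≤ x ∧ x ≤ rightIdealOf A}
      (rIdealDim R (rightIdealOf A)) := by
    refine devLE_of_embedding _ (OrderEmbedding.ofMapLEIff
      (fun x : {x : Submodule Rᵐᵒᵖ R // ⊥ ≤ x ∧ x ≤ rightIdealOf A} =>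
        (⟨x.1, x.2.2⟩ : {x : Submodule Rᵐᵒᵖ R // x ≤ rightIdealOf A}))
      (fun a b => Subtype.mk_le_mk)) hloA
  -- Part 1 : rKdim R = rKdimQ A
  have hhi1 : DevLE {x : Submodule Rᵐᵒᵖ R // rightIdealOf A ≤ x ∧ x ≤ ⊤} (rKdimQ A) := by
    refine devLE_of_embedding _ (OrderEmbedding.ofMapLEIff
      (fun x : {x : Submodule Rᵐᵒᵖ R // rightIdealOf A ≤ x ∧ x ≤ ⊤} => rmapS A x.1)
      (fun b c => (rmapS_le_iff A c.2.1).trans Subtype.coe_le_coe)) hKSd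
  have hext1 := devLE_extension (max (rIdealDim R (rightIdealOf A)) (rKdimQ A)) ⊥ ⊤
    (rightIdealOf A) bot_le le_top
    (devLE_mono_ord hloA' (le_max_left _ _)) (devLE_mono_ord hhi1 (le_max_right _ _))
  have hKle : rKdim R ≤ max (rIdealDim R (rightIdealOf A)) (rKdimQ A) :=
    dev_le (devLE_of_embedding _ embFullToPair hext1)
  have eq1 : rKdim R = rKdimQ A := by
    rcases le_max_iff.mp hKle with h | h
    · exact absurd h (not_le_of_gt h1)
    · exact le_antisymm h hdle
  refine ⟨eq1, ?_⟩
  -- Part 2 : rKdim R ≤ lKdim R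
  haveI : IsNoetherianRing A.ringCon.Quotient :=
    isNoetherianRing_of_surjective R A.ringCon.Quotient (qmapS A) (qmapS_surj A)
  haveI : IsNoetherianRing A.ringCon.Quotientᵐᵒᵖ := by
    refine isNoetherianRing_of_surjective Rᵐᵒᵖ A.ringCon.Quotientᵐᵒᵖ
      (RingHom.op (qmapS A)) ?_
    intro s
    obtain ⟨r, hr⟩ := qmapS_surj A s.unop
    exact ⟨MulOpposite.op r, (congrArg MulOpposite.op hr).trans (MulOpposite.op_unop s)⟩
  have hKH : RightKH A.ringCon.Quotient := by
    intro J hJ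
    have hle : rIdealDim A.ringCon.Quotient J ≤ rKdim A.ringCon.Quotient :=
      dev_le (devLE_of_embedding _ (embIic J) hKSd)
    refine hle.antisymm (le_of_not_gt fun hlt => ?_)
    have hltK : rIdealDim A.ringCon.Quotient J < rKdim R := lt_of_lt_of_le hlt hdle
    have hAI : rightIdealOf A ≤ rcomapS A J := by
      intro x hx
      show qmapS A x ∈ J
      rw [(qmapS_zero_iff A x).mpr hx]
      exact J.zero_mem
    have hloJ : DevLE {x : Submodule A.ringCon.Quotientᵐᵒᵖ A.ringCon.Quotient // x ≤ J}
        (rIdealDim A.ringCon.Quotient J) :=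
      devLE_dev ⟨_, devLE_of_embedding _ (embIic J) hKSd⟩
    have hsub : ∀ x : {x : Submodule Rᵐᵒᵖ R // rightIdealOf A ≤ x ∧ x ≤ rcomapS A J},
        rmapS A x.1 ≤ J := by
      rintro x s ⟨y, hy, rfl⟩
      exact x.2.2 hy
    have hhi2 : DevLE {x : Submodule Rᵐᵒᵖ R // rightIdealOf A ≤ x ∧ x ≤ rcomapS A J}
        (rIdealDim A.ringCon.Quotient J) := by
      refine devLE_of_embedding _ (OrderEmbedding.ofMapLEIff
        (fun x : {x : Submodule Rᵐᵒᵖ R // rightIdealOf A ≤ x ∧ x ≤ rcomapS A J} =>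
          (⟨rmapS A x.1, hsub x⟩ :
            {y : Submodule A.ringCon.Quotientᵐᵒᵖ A.ringCon.Quotient // y ≤ J}))
        (fun b c => Subtype.mk_le_mk.trans ((rmapS_le_iff A c.2.1).trans
          Subtype.coe_le_coe))) hloJ
    have hext2 := devLE_extension
      (max (rIdealDim R (rightIdealOf A)) (rIdealDim A.ringCon.Quotient J)) ⊥ (rcomapS A J)
      (rightIdealOf A) bot_le hAI
      (devLE_mono_ord hloA' (le_max_left _ _)) (devLE_mono_ord hhi2 (le_max_right _ _))
    have hIle : rIdealDim R (rcomapS A J) ≤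
        max (rIdealDim R (rightIdealOf A)) (rIdealDim A.ringCon.Quotient J) :=
      dev_le (devLE_of_embedding _ (embIicToPair (rcomapS A J)) hext2)
    have hIlt : rIdealDim R (rcomapS A J) < rKdim R :=
      lt_of_le_of_lt hIle (max_lt h1 hltK)
    have hIA := h2 (rcomapS A J) hIlt
    apply hJ
    rw [eq_bot_iff]
    intro s hs
    obtain ⟨r, rfl⟩ := qmapS_surj A s
    have hr : r ∈ rcomapS A J := hs
    have : r ∈ A := hIA hr
    rw [Submodule.mem_bot]
    exact (qmapS_zero_iff A r).mpr this
  have hsymS := hsym A.ringCon.Quotient hKH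
  have hlKS : lKdim A.ringCon.Quotient ≤ lKdim R :=
    dev_le (devLE_of_embedding _ (lcomapSE A) hKl)
  calc rKdim R = rKdimQ A := eq1
    _ = lKdim A.ringCon.Quotient := hsymS
    _ ≤ lKdim R := hlKS
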